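/- Let m, n, k ≥ 1, let 1 ≤ i_1 < ⋯ < i_k ≤ m, let j_1, …, j_k be pairwise distinct elements of {1,…,n}, and let β be the join of the join-congruences cg(i_1,j_1), …, cg(i_k,j_k) of the grid K_{m,n}. Then: (i) for all elements (a,b), (c,d) of K_{m,n}, ((a,b),(c,d)) ∈ β if and only if both ((a,b),(max(a,c),max(b,d))) ∈ β and ((c,d),(max(a,c),max(b,d))) ∈ β; (ii) for 0 ≤ r < s ≤ m and 0 ≤ t ≤ n, ((r,t),(s,t)) ∈ β if and only if for every x ∈ {r+1,…,s} there is a p ∈ {1,…,k} with i_p = x and j_p ≤ t; (iii) for 0 ≤ r < s ≤ n and 0 ≤ t ≤ m, ((t,r),(t,s)) ∈ β if and only if for every x ∈ {r+1,…,s} there is a p ∈ {1,…,k} with j_p = x and i_p ≤ t. -/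

import Mathlib

open Fin.NatCast

/-- The grid `K_{m,n}`: the lattice `{0,…,m} × {0,…,n}` ordered componentwise
(join and meet are componentwise max and min). -/
abbrev Grid (m n : ℕ) := Fin (m + 1) × Fin (n + 1)

/-- A join-congruence of a join-semilattice: an equivalence relation compatible with
joining a fixed element. -/
def IsJoinCong {α : Type*} [SemilatticeSup α] (r : α → α → Prop) : Prop :=
  Equivalence r ∧ ∀ a b c : α, r a b → r (a ⊔ c) (b ⊔ c)

/-- The join-congruence generated by a relation `R`: the smallest join-congruence
containing `R` (the intersection of all join-congruences containing `R`). -/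
def joinCongGen {α : Type*} [SemilatticeSup α] (R : α → α → Prop) : α → α → Prop :=
  fun a b => ∀ r : α → α → Prop, IsJoinCong r → (∀ x y, R x y → r x y) → r a b

/-- The join of a family of join-congruences: the smallest join-congruence containing
all members of the family. -/
def joinCongSup {α : Type*} [SemilatticeSup α] {ι : Sort*} (f : ι → α → α → Prop) :
    α → α → Prop :=
  joinCongGen fun a b => ∃ i, f i a b

/-- For `1 ≤ i ≤ m` and `1 ≤ j ≤ n`, the join-congruence `cg(i,j)` of the grid `K_{m,n}`
generated by the pairs `((i,j−1),(i,j))` and `((i−1,j),(i,j))`. -/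
def cg (m n i j : ℕ) : Grid m n → Grid m n → Prop :=
  joinCongGen fun a b =>
    b = ((i : Fin (m + 1)), (j : Fin (n + 1))) ∧
      (a = ((i : Fin (m + 1)), ((j - 1 : ℕ) : Fin (n + 1))) ∨
        a = (((i - 1 : ℕ) : Fin (m + 1)), (j : Fin (n + 1))))

/-!
For a fixed point `c`, the relation `a ≤ c ↔ b ≤ c` is a join-congruence, and it contains the
generators of `cg(i_p, j_p)` unless `(i_p, j_p)` is `(c₁+1, y)` with `y ≤ c₂` or `(x, c₂+1)` with
`x ≤ c₁`.
If some `x ∈ {r+1,…,s}` is not an `i_p` with `j_p ≤ t`, then `c = (x-1, v)`, with `v = j_p - 1`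
when `x = i_p` and `v = n` otherwise, avoids all these positions (the `i_p` and the `j_p` are
pairwise distinct), so it separates `(r,t) ≤ c` from `(s,t) ≰ c` and the pair is not in `β`.
Conversely, joining the generator `((x-1, j_p), (x, j_p))` with `(x-1, t)` gives
`((x-1, t), (x, t)) ∈ β` whenever `x = i_p` and `j_p ≤ t`, and these steps chain from `r` to `s`.
Part (iii) is part (ii) of the transposed grid, and (i) holds in any join-congruence.
-/

section JoinCong

variable {α β : Type*} [SemilatticeSup α] [SemilatticeSup β]

namespace IsJoinCong

variable {r : α → α → Prop}

theorem comap {F : Type*} [FunLike F β α] [SupHomClass F β α] (hr : IsJoinCong r) (f : F) :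
    IsJoinCong fun a b => r (f a) (f b) :=
  ⟨⟨fun _ => hr.1.refl _, hr.1.symm, hr.1.trans⟩, fun a b c h => by
    simpa only [map_sup] using hr.2 _ _ (f c) h⟩

theorem rel_iff_rel_sup (hr : IsJoinCong r) (a b : α) :
    r a b ↔ r a (a ⊔ b) ∧ r b (a ⊔ b) := by
  refine ⟨fun h => ⟨?_, ?_⟩, fun h => hr.1.trans h.1 (hr.1.symm h.2)⟩
  · simpa only [sup_idem, sup_comm b a] using hr.2 a b a h
  · simpa only [sup_idem] using hr.2 b a b (hr.1.symm h)

end IsJoinCong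

theorem isJoinCong_le_iff_le (c : α) : IsJoinCong fun a b : α => (a ≤ c ↔ b ≤ c) :=
  ⟨⟨fun _ => Iff.rfl, Iff.symm, Iff.trans⟩, fun a b d h => by simp only [sup_le_iff, h]⟩

variable {R : α → α → Prop} {r : α → α → Prop} {a b : α}

theorem isJoinCong_joinCongGen (R : α → α → Prop) : IsJoinCong (joinCongGen R) :=
  ⟨⟨fun a _ hr _ => hr.1.refl a, fun h r hr hR => hr.1.symm (h r hr hR),
    fun h₁ h₂ r hr hR => hr.1.trans (h₁ r hr hR) (h₂ r hr hR)⟩,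
    fun _ _ c h r hr hR => hr.2 _ _ c (h r hr hR)⟩

theorem joinCongGen.of_rel (h : R a b) : joinCongGen R a b := fun _ _ hR => hR a b h

theorem joinCongGen_le (hr : IsJoinCong r) (hR : ∀ a b, R a b → r a b)
    (h : joinCongGen R a b) : r a b :=
  h r hr hR

theorem joinCongGen_orderIso_iff (e : α ≃o β) (R : β → β → Prop) :
    joinCongGen R (e a) (e b) ↔ joinCongGen (fun x y => R (e x) (e y)) a b := by
  refine ⟨fun h r hr hR => ?_, fun h r hr hR => h _ (hr.comap e) fun x y => hR _ _⟩
  simpa using h _ (hr.comap e.symm) fun x y hxy => hR _ _ (by simpa using hxy)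

theorem joinCongSup.of_rel {ι : Sort*} {f : ι → α → α → Prop} (s : ι) (h : f s a b) :
    joinCongSup f a b :=
  joinCongGen.of_rel ⟨s, h⟩

theorem isJoinCong_joinCongSup {ι : Sort*} (f : ι → α → α → Prop) :
    IsJoinCong (joinCongSup f) :=
  isJoinCong_joinCongGen _

end JoinCong

theorem Fin.natCast_le_iff_le_val {a m : ℕ} (ha : a ≤ m) {c : Fin (m + 1)} :
    (a : Fin (m + 1)) ≤ c ↔ a ≤ c := by
  rw [Fin.le_def, Fin.val_cast_of_lt (Nat.lt_succ_of_le ha)]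

theorem cg_pred_fst (m n a b : ℕ) :
    cg m n a b (((a - 1 : ℕ) : Fin (m + 1)), (b : Fin (n + 1)))
      ((a : Fin (m + 1)), (b : Fin (n + 1))) :=
  joinCongGen.of_rel ⟨rfl, .inr rfl⟩

theorem cg_swap_iff (m n a b : ℕ) (x y : Grid n m) :
    cg m n a b x.swap y.swap ↔ cg n m b a x y := by
  have := joinCongGen_orderIso_iff (a := x) (b := y) (OrderIso.prodComm : Grid n m ≃o Grid m n)
  simp only [OrderIso.coe_prodComm] at this
  rw [cg, this, cg]
  congr! 2 with x y
  simp only [Prod.swap_eq_iff_eq_swap, Prod.swap_prod_mk, or_comm]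

section Grid

variable {m n : ℕ} {ι : Type*} {i j : ι → ℕ}

theorem joinCongSup_cg_swap_iff (x y : Grid n m) :
    joinCongSup (fun p => cg m n (i p) (j p)) x.swap y.swap ↔
      joinCongSup (fun p => cg n m (j p) (i p)) x y := by
  have := joinCongGen_orderIso_iff (a := x) (b := y) (OrderIso.prodComm : Grid n m ≃o Grid m n)
  simp only [OrderIso.coe_prodComm] at this
  rw [joinCongSup, this, joinCongSup]
  simp only [cg_swap_iff]

theorem le_iff_le_of_joinCongSup_cg (him : ∀ p, i p ≤ m) (hjn : ∀ p, j p ≤ n) (c : Grid m n)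
    (h₁ : ∀ p, i p ≤ c.1 → j p ≠ c.2 + 1) (h₂ : ∀ p, j p ≤ c.2 → i p ≠ c.1 + 1) {x y : Grid m n}
    (hxy : joinCongSup (fun p => cg m n (i p) (j p)) x y) : x ≤ c ↔ y ≤ c := by
  have hc := isJoinCong_le_iff_le c
  refine joinCongGen_le (r := fun a b => a ≤ c ↔ b ≤ c) hc ?_ hxy
  rintro a b ⟨p, hp⟩
  refine joinCongGen_le (r := fun a b => a ≤ c ↔ b ≤ c) hc ?_ hp
  have h₁ := h₁ p
  have h₂ := h₂ p
  have hi := him p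
  have hj := hjn p
  rintro a b ⟨rfl, rfl | rfl⟩ <;>
  · rw [Prod.mk_le_mk, Prod.mk_le_mk]
    simp only [Fin.natCast_le_iff_le_val hi, Fin.natCast_le_iff_le_val hj,
      Fin.natCast_le_iff_le_val ((Nat.sub_le _ 1).trans hi),
      Fin.natCast_le_iff_le_val ((Nat.sub_le _ 1).trans hj)]
    omega

theorem joinCongSup_cg_succ_fst (hjn : ∀ p, j p ≤ n) {x t : ℕ} (hx : x + 1 ≤ m) (ht : t ≤ n)
    {p : ι} (hp : i p = x + 1) (hpt : j p ≤ t) :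
    joinCongSup (fun p => cg m n (i p) (j p)) ((x : Fin (m + 1)), (t : Fin (n + 1)))
      (((x + 1 : ℕ) : Fin (m + 1)), (t : Fin (n + 1))) := by
  have := (isJoinCong_joinCongSup _).2 _ _ ((x : Fin (m + 1)), (t : Fin (n + 1)))
    (joinCongSup.of_rel (f := fun p => cg m n (i p) (j p)) p (cg_pred_fst m n (i p) (j p)))
  have hjt : (j p : Fin (n + 1)) ≤ t := (Fin.natCast_le_natCast (hjn p) ht).2 hpt
  have hxx : (x : Fin (m + 1)) ≤ (x + 1 : ℕ) := (Fin.natCast_le_natCast (by omega) hx).2 x.le_succ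
  rwa [hp, Nat.add_sub_cancel, Prod.mk_sup_mk, Prod.mk_sup_mk, sup_idem, sup_eq_right.2 hjt,
    sup_eq_left.2 hxx] at this

theorem joinCongSup_cg_fst_of_forall (hjn : ∀ p, j p ≤ n) {r s t : ℕ} (hrs : r ≤ s)
    (hs : s ≤ m) (ht : t ≤ n) (h : ∀ x : ℕ, r + 1 ≤ x → x ≤ s → ∃ p, i p = x ∧ j p ≤ t) :
    joinCongSup (fun p => cg m n (i p) (j p)) ((r : Fin (m + 1)), (t : Fin (n + 1)))
      ((s : Fin (m + 1)), (t : Fin (n + 1))) := by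
  induction s, hrs using Nat.le_induction with
  | base => exact (isJoinCong_joinCongSup _).1.refl _
  | succ s hrs ih =>
    obtain ⟨p, hp, hpt⟩ := h (s + 1) (by omega) le_rfl
    exact (isJoinCong_joinCongSup _).1.trans (ih (by omega) fun x hx hxs => h x hx (by omega))
      (joinCongSup_cg_succ_fst hjn hs ht hp hpt)

theorem exists_of_joinCongSup_cg_fst (hi : Function.Injective i) (hj : Function.Injective j)
    (him : ∀ p, i p ≤ m) (hjn : ∀ p, j p ≤ n) {r s t : ℕ} (hs : s ≤ m) (ht : t ≤ n)
    (h : joinCongSup (fun p => cg m n (i p) (j p)) ((r : Fin (m + 1)), (t : Fin (n + 1)))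
      ((s : Fin (m + 1)), (t : Fin (n + 1)))) :
    ∀ x : ℕ, r + 1 ≤ x → x ≤ s → ∃ p, i p = x ∧ j p ≤ t := by
  intro x hrx hxs
  by_contra! hx
  obtain ⟨v, hvn, htv, hv₁, hv₂⟩ : ∃ v ≤ n, t ≤ v ∧ (∀ p, i p ≤ x - 1 → j p ≠ v + 1) ∧
      ∀ p, j p ≤ v → i p ≠ x - 1 + 1 := by
    by_cases hxi : ∃ p, i p = x
    · obtain ⟨p₀, hp₀⟩ := hxi
      have := hx p₀ hp₀
      refine ⟨j p₀ - 1, by have := hjn p₀; omega, by omega, fun p hpx hpv => ?_,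
        fun p hpv hpx => ?_⟩
      · have := hj (hpv.trans (by omega : j p₀ - 1 + 1 = j p₀))
        subst this
        omega
      · have := hi (hpx.trans (by omega : x - 1 + 1 = i p₀))
        subst this
        omega
    · exact ⟨n, le_rfl, ht, fun p _ hp => by have := hjn p; omega,
        fun p _ hp => hxi ⟨p, by omega⟩⟩
  have := le_iff_le_of_joinCongSup_cg him hjn (⟨x - 1, by omega⟩, ⟨v, by omega⟩) hv₁ hv₂ h
  rw [Prod.mk_le_mk, Prod.mk_le_mk] at this
  simp only [Fin.natCast_le_iff_le_val (by omega : r ≤ m), Fin.natCast_le_iff_le_val hs,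
    Fin.natCast_le_iff_le_val ht] at this
  omega

theorem joinCongSup_cg_fst_iff (hi : Function.Injective i) (hj : Function.Injective j)
    (him : ∀ p, i p ≤ m) (hjn : ∀ p, j p ≤ n) {r s t : ℕ} (hrs : r ≤ s) (hs : s ≤ m)
    (ht : t ≤ n) :
    joinCongSup (fun p => cg m n (i p) (j p)) ((r : Fin (m + 1)), (t : Fin (n + 1)))
      ((s : Fin (m + 1)), (t : Fin (n + 1))) ↔
      ∀ x : ℕ, r + 1 ≤ x → x ≤ s → ∃ p, i p = x ∧ j p ≤ t :=
  ⟨exists_of_joinCongSup_cg_fst hi hj him hjn hs ht,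
    joinCongSup_cg_fst_of_forall hjn hrs hs ht⟩

end Grid

theorem joinCongSup_description_general (m n k : ℕ) (i j : Fin k → ℕ)
    (hmono : StrictMono i) (him : ∀ s, i s ≤ m)
    (hjinj : Function.Injective j) (hjn : ∀ s, j s ≤ n)
    (β : Grid m n → Grid m n → Prop)
    (hβ : β = joinCongSup fun s : Fin k => cg m n (i s) (j s)) :
    (∀ p q : Grid m n, β p q ↔ (β p (p ⊔ q) ∧ β q (p ⊔ q))) ∧
    (∀ r s t : ℕ, r < s → s ≤ m → t ≤ n →
      (β ((r : Fin (m + 1)), (t : Fin (n + 1))) ((s : Fin (m + 1)), (t : Fin (n + 1))) ↔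
        ∀ x : ℕ, r + 1 ≤ x → x ≤ s → ∃ p : Fin k, i p = x ∧ j p ≤ t)) ∧
    (∀ r s t : ℕ, r < s → s ≤ n → t ≤ m →
      (β ((t : Fin (m + 1)), (r : Fin (n + 1))) ((t : Fin (m + 1)), (s : Fin (n + 1))) ↔
        ∀ x : ℕ, r + 1 ≤ x → x ≤ s → ∃ p : Fin k, j p = x ∧ i p ≤ t)) := by
  subst hβ
  refine ⟨(isJoinCong_joinCongSup _).rel_iff_rel_sup, fun r s t hrs hs ht => ?_,
    fun r s t hrs hs ht => ?_⟩
  · exact joinCongSup_cg_fst_iff hmono.injective hjinj him hjn hrs.le hs ht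
  · exact (joinCongSup_cg_swap_iff (((r : Fin (n + 1)), (t : Fin (m + 1))))
      ((s : Fin (n + 1)), (t : Fin (m + 1)))).trans
      (joinCongSup_cg_fst_iff hjinj hmono.injective hjn him hrs.le hs ht)

/-- Description of the join `β` of the join-congruences `cg(i_s, j_s)` of the grid
`K_{m,n}`, where `1 ≤ i_1 < ⋯ < i_k ≤ m` and the `j_s` are pairwise distinct elements
of `{1,…,n}`:
(i) `(p,q) ∈ β` iff `(p, p ⊔ q) ∈ β` and `(q, p ⊔ q) ∈ β` (joins are componentwise
maxima);
(ii) for `0 ≤ r < s ≤ m`, `((r,t),(s,t)) ∈ β` iff every `x ∈ {r+1,…,s}` equals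
`i_p` for some `p` with `j_p ≤ t`;
(iii) for `0 ≤ r < s ≤ n`, `((t,r),(t,s)) ∈ β` iff every `x ∈ {r+1,…,s}` equals
`j_p` for some `p` with `i_p ≤ t`. -/
theorem joinCongSup_description (m n k : ℕ) (hm : 1 ≤ m) (hn : 1 ≤ n) (hk : 1 ≤ k)
    (i j : Fin k → ℕ)
    (hmono : StrictMono i) (hi1 : ∀ s, 1 ≤ i s) (him : ∀ s, i s ≤ m)
    (hjinj : Function.Injective j) (hj1 : ∀ s, 1 ≤ j s) (hjn : ∀ s, j s ≤ n)
    (β : Grid m n → Grid m n → Prop)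
    (hβ : β = joinCongSup fun s : Fin k => cg m n (i s) (j s)) :
    (∀ p q : Grid m n, β p q ↔ (β p (p ⊔ q) ∧ β q (p ⊔ q))) ∧
    (∀ r s t : ℕ, r < s → s ≤ m → t ≤ n →
      (β ((r : Fin (m + 1)), (t : Fin (n + 1))) ((s : Fin (m + 1)), (t : Fin (n + 1))) ↔
        ∀ x : ℕ, r + 1 ≤ x → x ≤ s → ∃ p : Fin k, i p = x ∧ j p ≤ t)) ∧
    (∀ r s t : ℕ, r < s → s ≤ n → t ≤ m →
      (β ((t : Fin (m + 1)), (r : Fin (n + 1))) ((t : Fin (m + 1)), (s : Fin (n + 1))) ↔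
        ∀ x : ℕ, r + 1 ≤ x → x ≤ s → ∃ p : Fin k, j p = x ∧ i p ≤ t)) :=
  joinCongSup_description_general m n k i j hmono him hjinj hjn β hβ
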